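/- arXiv:2401.13423 — 3 statements merged into one kernel-verified Lean document; each statement's English description precedes it below -/
import Mathlib

section
/- For the complete graph K_n with n ≥ 3, the 3-path connectivity π₃(K_n) equals ⌊n/2⌋. -/
open SimpleGraph

/-- A Steiner `S`-path in `G`: a path whose vertex set contains `S`. -/
structure SteinerPath {V : Type*} (G : SimpleGraph V) (S : Set V) where
  first : V
  last : V
  walk : G.Walk first last
  isPath : walk.IsPath
  contains : ∀ s ∈ S, s ∈ walk.support

/-- A family of internally disjoint `S`-paths: any two intersect exactly in `S`
and share no edges. -/
def IDFamily {V : Type*} (G : SimpleGraph V) (S : Set V) {t : ℕ}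
    (P : Fin t → SteinerPath G S) : Prop :=
  ∀ i j, i ≠ j →
    ({v | v ∈ (P i).walk.support} ∩ {v | v ∈ (P j).walk.support} = S) ∧
    (∀ e ∈ (P i).walk.edges, e ∉ (P j).walk.edges)

/-- The maximum number of internally disjoint `S`-paths in `G`. -/
noncomputable def steinerPathNumber {V : Type*} (G : SimpleGraph V) (S : Set V) : ℕ :=
  sSup {t | ∃ P : Fin t → SteinerPath G S, IDFamily G S P}

/-- The `r`-path connectivity of `G`. -/
noncomputable def pathConnectivity {V : Type*} (G : SimpleGraph V) (r : ℕ) : ℕ :=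
  sInf {m | ∃ S : Finset V, S.card = r ∧ steinerPathNumber G (↑S) = m}

open Finset




variable {n : ℕ}

/-- The triangle edges on `a b c`. -/
def Tri (a b c : Fin n) : Finset (Sym2 (Fin n)) := {s(a,b), s(b,c), s(a,c)}

lemma mem_Tri {a b c x y : Fin n} (hx : x = a ∨ x = b ∨ x = c) (hy : y = a ∨ y = b ∨ y = c)
    (hxy : x ≠ y) : s(x,y) ∈ Tri a b c := by
  simp only [Tri, mem_insert, mem_singleton, Sym2.eq_iff]
  rcases hx with rfl|rfl|rfl <;> rcases hy with rfl|rfl|rfl <;> tauto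

lemma card_Tri_le (a b c : Fin n) : (Tri a b c).card ≤ 3 :=
  le_trans (card_insert_le _ _) (Nat.succ_le_succ (card_insert_le _ _))

lemma mem3 {a b c p q r z : Fin n} (hsub : ({a,b,c} : Finset (Fin n)) ⊆ {p,q,r})
    (h3 : ({a,b,c} : Finset (Fin n)).card = 3) (hz : z ∈ ({p,q,r} : Finset (Fin n))) :
    z = a ∨ z = b ∨ z = c := by
  have hle : ({p,q,r} : Finset (Fin n)).card ≤ ({a,b,c} : Finset (Fin n)).card := by
    rw [h3]; exact le_trans (card_insert_le _ _) (Nat.succ_le_succ (card_insert_le _ _))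
  have := Finset.eq_of_subset_of_card_le hsub hle
  rw [← this] at hz; simpa using hz

set_option maxHeartbeats 1000000 in
lemma pathBound {a b c : Fin n} (hab : a ≠ b) (hac : a ≠ c) (hbc : b ≠ c)
    {u v : Fin n} (p : (⊤ : SimpleGraph (Fin n)).Walk u v) (hp : p.IsPath)
    (ha : a ∈ p.support) (hb : b ∈ p.support) (hc : c ∈ p.support) :
    5 ≤ p.support.toFinset.card + (p.edges.toFinset ∩ Tri a b c).card := by
  have hnodup : p.support.Nodup := hp.support_nodup
  have hcard : p.support.toFinset.card = p.length + 1 := by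
    rw [List.toFinset_card_of_nodup hnodup, Walk.length_support]
  have h3 : ({a,b,c} : Finset (Fin n)).card = 3 := by
    rw [card_insert_of_notMem (by simp [hab, hac]),
      card_insert_of_notMem (by simp [hbc]), card_singleton]
  have hsub : ({a,b,c} : Finset (Fin n)) ⊆ p.support.toFinset := by
    intro z hz
    simp only [mem_insert, mem_singleton] at hz
    rcases hz with rfl|rfl|rfl <;> simpa
  have hcard3 : (3:ℕ) ≤ p.support.toFinset.card := h3 ▸ card_le_card hsub
  by_cases h5 : 5 ≤ p.support.toFinset.card
  · omega
  · cases p with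
    | nil =>
      simp only [Walk.length_nil] at hcard; omega
    | cons h1 q =>
      rename_i x₁
      cases q with
      | nil => simp only [Walk.length_cons, Walk.length_nil] at hcard; omega
      | cons h2 r =>
        rename_i x₂
        cases r with
        | nil =>
          -- length 2 : support [u, x₁, v]
          have hs : (Walk.cons h1 (Walk.cons h2 Walk.nil)).support = [u, x₁, v] := by simp
          rw [hs] at hnodup
          have hux : u ≠ x₁ := by have h := hnodup; simp at h; tauto
          have huv : u ≠ v := by have h := hnodup; simp at h; tauto
          have hxv : x₁ ≠ v := by have h := hnodup; simp at h; tauto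
          have hsub2 : ({a,b,c} : Finset (Fin n)) ⊆ {u, x₁, v} := by
            simpa [hs] using hsub
          have hu := mem3 hsub2 h3 (by simp : u ∈ ({u,x₁,v} : Finset (Fin n)))
          have hx := mem3 hsub2 h3 (by simp : x₁ ∈ ({u,x₁,v} : Finset (Fin n)))
          have hv := mem3 hsub2 h3 (by simp : v ∈ ({u,x₁,v} : Finset (Fin n)))
          have e1 : s(u,x₁) ∈ Tri a b c := mem_Tri hu hx hux
          have e2 : s(x₁,v) ∈ Tri a b c := mem_Tri hx hv hxv
          have hpair : ({s(u,x₁), s(x₁,v)} : Finset (Sym2 (Fin n))) ⊆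
              (Walk.cons h1 (Walk.cons h2 Walk.nil)).edges.toFinset ∩ Tri a b c := by
            intro e he
            simp only [mem_insert, mem_singleton] at he
            rcases he with rfl|rfl <;> simp [e1, e2]
          have h2le : 2 ≤ ((Walk.cons h1 (Walk.cons h2 Walk.nil)).edges.toFinset ∩ Tri a b c).card := by
            refine le_trans (le_of_eq ?_) (card_le_card hpair)
            rw [card_insert_of_notMem (by simp [Sym2.eq_iff]; tauto), card_singleton]
          simp only [Walk.length_cons, Walk.length_nil] at hcard
          omega
        | cons h3' s =>
          rename_i x₃
          cases s with
          | nil =>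
            -- length 3 : support [u, x₁, x₂, v]
            have hs : (Walk.cons h1 (Walk.cons h2 (Walk.cons h3' Walk.nil))).support
                = [u, x₁, x₂, v] := by simp
            rw [hs] at hnodup
            have hux1 : u ≠ x₁ := by have h := hnodup; simp at h; tauto
            have hx12 : x₁ ≠ x₂ := by have h := hnodup; simp at h; tauto
            have hx2v : x₂ ≠ v := by have h := hnodup; simp at h; tauto
            have hsub2 : ({a,b,c} : Finset (Fin n)) ⊆ {u, x₁, x₂, v} := by
              simpa [hs] using hsub
            have key : ∃ e ∈ (Walk.cons h1 (Walk.cons h2 (Walk.cons h3' Walk.nil))).edges.toFinset,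
                e ∈ Tri a b c := by
              by_cases hx1 : x₁ = a ∨ x₁ = b ∨ x₁ = c
              · by_cases hx2 : x₂ = a ∨ x₂ = b ∨ x₂ = c
                · exact ⟨s(x₁,x₂), by simp, mem_Tri hx1 hx2 hx12⟩
                · -- x₂ outside S: a,b,c ∈ {u,x₁,v}
                  have hsub3 : ({a,b,c} : Finset (Fin n)) ⊆ {u, x₁, v} := by
                    intro z hz
                    have hz2 := hsub2 hz
                    simp only [mem_insert, mem_singleton] at hz hz2 ⊢
                    rcases hz2 with h|h|h|h
                    · exact Or.inl h
                    · exact Or.inr (Or.inl h)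
                    · exact absurd (h ▸ hz) hx2
                    · exact Or.inr (Or.inr h)
                  have hu := mem3 hsub3 h3 (by simp : u ∈ ({u,x₁,v} : Finset (Fin n)))
                  exact ⟨s(u,x₁), by simp, mem_Tri hu hx1 hux1⟩
              · -- x₁ outside S: a,b,c ∈ {u,x₂,v}
                have hsub3 : ({a,b,c} : Finset (Fin n)) ⊆ {u, x₂, v} := by
                  intro z hz
                  have hz2 := hsub2 hz
                  simp only [mem_insert, mem_singleton] at hz hz2 ⊢
                  rcases hz2 with h|h|h|h
                  · exact Or.inl h
                  · exact absurd (h ▸ hz) hx1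
                  · exact Or.inr (Or.inl h)
                  · exact Or.inr (Or.inr h)
                have hx2 := mem3 hsub3 h3 (by simp : x₂ ∈ ({u,x₂,v} : Finset (Fin n)))
                have hv := mem3 hsub3 h3 (by simp : v ∈ ({u,x₂,v} : Finset (Fin n)))
                exact ⟨s(x₂,v), by simp, mem_Tri hx2 hv hx2v⟩
            obtain ⟨e, he1, he2⟩ := key
            have h1le : 1 ≤ ((Walk.cons h1 (Walk.cons h2 (Walk.cons h3' Walk.nil))).edges.toFinset
                ∩ Tri a b c).card :=
              Finset.card_pos.mpr ⟨e, Finset.mem_inter.mpr ⟨he1, he2⟩⟩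
            simp only [Walk.length_cons, Walk.length_nil] at hcard
            omega
          | cons h4 t =>
            exfalso
            simp only [Walk.length_cons] at hcard
            omega

lemma family_bound (hn : 3 ≤ n) {a b c : Fin n} (hab : a ≠ b) (hac : a ≠ c) (hbc : b ≠ c)
    {t : ℕ} (P : Fin t → SteinerPath (⊤ : SimpleGraph (Fin n)) ↑({a,b,c} : Finset (Fin n)))
    (hP : IDFamily _ _ P) : t ≤ n / 2 := by
  set supp : Fin t → Finset (Fin n) := fun i => (P i).walk.support.toFinset with hsupp
  set F : Fin t → Finset (Sym2 (Fin n)) := fun i => (P i).walk.edges.toFinset ∩ Tri a b c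
    with hF
  have h3 : ({a,b,c} : Finset (Fin n)).card = 3 := by
    rw [card_insert_of_notMem (by simp [hab, hac]),
      card_insert_of_notMem (by simp [hbc]), card_singleton]
  have hcont : ∀ i, ({a,b,c} : Finset (Fin n)) ⊆ supp i := by
    intro i z hz
    simp only [hsupp, List.mem_toFinset]
    exact (P i).contains z (by exact_mod_cast hz)
  have hper : ∀ i, 5 ≤ (supp i).card + (F i).card := by
    intro i
    exact pathBound hab hac hbc (P i).walk (P i).isPath
      ((P i).contains a (by simp)) ((P i).contains b (by simp))
      ((P i).contains c (by simp))
  -- vertex budget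
  have hDdisj : ∀ i ∈ (univ : Finset (Fin t)), ∀ j ∈ univ, i ≠ j →
      Disjoint (supp i \ ({a,b,c} : Finset (Fin n))) (supp j \ ({a,b,c} : Finset (Fin n))) := by
    intro i _ j _ hij
    rw [Finset.disjoint_left]
    intro v hvi hvj
    rw [Finset.mem_sdiff] at hvi hvj
    have hv : v ∈ ({v | v ∈ (P i).walk.support} ∩ {v | v ∈ (P j).walk.support} : Set (Fin n)) := by
      refine ⟨?_, ?_⟩ <;> simp only [Set.mem_setOf_eq]
      · exact List.mem_toFinset.mp hvi.1
      · exact List.mem_toFinset.mp hvj.1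
    rw [(hP i j hij).1] at hv
    exact hvi.2 (by exact_mod_cast hv)
  have hvert : ∑ i : Fin t, (supp i \ ({a,b,c} : Finset (Fin n))).card ≤ n - 3 := by
    rw [← Finset.card_biUnion hDdisj]
    have hsub : (univ.biUnion fun i => supp i \ ({a,b,c} : Finset (Fin n)))
        ⊆ univ \ ({a,b,c} : Finset (Fin n)) := by
      intro v hv
      rw [Finset.mem_biUnion] at hv
      obtain ⟨i, _, hv⟩ := hv
      rw [Finset.mem_sdiff] at hv ⊢
      exact ⟨mem_univ v, hv.2⟩
    calc _ ≤ (univ \ ({a,b,c} : Finset (Fin n))).card := card_le_card hsub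
      _ = n - 3 := by rw [card_sdiff_of_subset (subset_univ _), card_univ, Fintype.card_fin, h3]
  -- edge budget
  have hFdisj : ∀ i ∈ (univ : Finset (Fin t)), ∀ j ∈ univ, i ≠ j → Disjoint (F i) (F j) := by
    intro i _ j _ hij
    rw [Finset.disjoint_left]
    intro e hei hej
    rw [hF] at hei hej
    simp only [Finset.mem_inter, List.mem_toFinset] at hei hej
    exact (hP i j hij).2 e hei.1 hej.1
  have hedge : ∑ i : Fin t, (F i).card ≤ 3 := by
    rw [← Finset.card_biUnion hFdisj]
    have hsub : (univ.biUnion F) ⊆ Tri a b c := by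
      intro e he
      rw [Finset.mem_biUnion] at he
      obtain ⟨i, _, he⟩ := he
      exact (Finset.mem_inter.mp he).2
    exact le_trans (card_le_card hsub) (card_Tri_le a b c)
  have hsplit : ∀ i, (supp i).card = (supp i \ ({a,b,c} : Finset (Fin n))).card + 3 := by
    intro i
    rw [← h3, ← Finset.card_sdiff_add_card_eq_card (hcont i)]
  have hsum : 5 * t ≤ ∑ i : Fin t, ((supp i).card + (F i).card) := by
    calc 5 * t = ∑ _i : Fin t, 5 := by simp [mul_comm]
      _ ≤ _ := Finset.sum_le_sum fun i _ => hper i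
  have : ∑ i : Fin t, ((supp i).card + (F i).card)
      = (∑ i : Fin t, (supp i \ ({a,b,c} : Finset (Fin n))).card) + 3 * t
        + ∑ i : Fin t, (F i).card := by
    rw [Finset.sum_add_distrib]
    congr 1
    calc ∑ i : Fin t, (supp i).card
        = ∑ i : Fin t, ((supp i \ ({a,b,c} : Finset (Fin n))).card + 3) :=
          Finset.sum_congr rfl fun i _ => hsplit i
      _ = (∑ i : Fin t, (supp i \ ({a,b,c} : Finset (Fin n))).card) + 3 * t := by
          rw [Finset.sum_add_distrib]; simp [mul_comm]
  omega




section Shapes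

variable {a b c u w v : Fin n}

/-- the path a-b-c -/
def pathA (hab : a ≠ b) (hbc : b ≠ c) (hac : a ≠ c) :
    SteinerPath (⊤ : SimpleGraph (Fin n)) ↑({a,b,c} : Finset (Fin n)) where
  first := a
  last := c
  walk := .cons (v := b) (by simp [hab]) (.cons (v := c) (by simp [hbc]) .nil)
  isPath := by
    rw [Walk.isPath_def]
    simp [hab, hbc, hac]
  contains := by
    intro s hs
    simp only [Finset.coe_insert, Set.mem_insert_iff, Finset.coe_singleton,
      Set.mem_singleton_iff] at hs
    simp only [Walk.support_cons, Walk.support_nil, List.mem_cons, List.mem_singleton]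
    tauto

@[simp] lemma pathA_support (hab : a ≠ b) (hbc : b ≠ c) (hac : a ≠ c) :
    (pathA hab hbc hac).walk.support = [a, b, c] := rfl

@[simp] lemma pathA_edges (hab : a ≠ b) (hbc : b ≠ c) (hac : a ≠ c) :
    (pathA hab hbc hac).walk.edges = [s(a,b), s(b,c)] := rfl

/-- the path b-v-a-c -/
def pathB (hab : a ≠ b) (hbc : b ≠ c) (hac : a ≠ c)
    (hva : v ≠ a) (hvb : v ≠ b) (hvc : v ≠ c) :
    SteinerPath (⊤ : SimpleGraph (Fin n)) ↑({a,b,c} : Finset (Fin n)) where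
  first := b
  last := c
  walk := .cons (v := v) (by simp [hvb.symm]) (.cons (v := a) (by simp [hva]) (.cons (v := c) (by simp [hac]) .nil))
  isPath := by
    rw [Walk.isPath_def]
    simp [hab, hbc, hac, hva, hvb, hvc, Ne.symm hab, hvb.symm]
  contains := by
    intro s hs
    simp only [Finset.coe_insert, Set.mem_insert_iff, Finset.coe_singleton,
      Set.mem_singleton_iff] at hs
    simp only [Walk.support_cons, Walk.support_nil, List.mem_cons, List.mem_singleton]
    tauto

@[simp] lemma pathB_support (hab : a ≠ b) (hbc : b ≠ c) (hac : a ≠ c)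
    (hva : v ≠ a) (hvb : v ≠ b) (hvc : v ≠ c) :
    (pathB hab hbc hac hva hvb hvc).walk.support = [b, v, a, c] := rfl

@[simp] lemma pathB_edges (hab : a ≠ b) (hbc : b ≠ c) (hac : a ≠ c)
    (hva : v ≠ a) (hvb : v ≠ b) (hvc : v ≠ c) :
    (pathB hab hbc hac hva hvb hvc).walk.edges = [s(b,v), s(v,a), s(a,c)] := rfl

/-- the path a-u-b-w-c -/
def pathC (hab : a ≠ b) (hbc : b ≠ c) (hac : a ≠ c)
    (hua : u ≠ a) (hub : u ≠ b) (huc : u ≠ c)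
    (hwa : w ≠ a) (hwb : w ≠ b) (hwc : w ≠ c) (huw : u ≠ w) :
    SteinerPath (⊤ : SimpleGraph (Fin n)) ↑({a,b,c} : Finset (Fin n)) where
  first := a
  last := c
  walk := .cons (v := u) (by simp [hua.symm]) (.cons (v := b) (by simp [hub]) (.cons (v := w) (by simp [hwb.symm])
    (.cons (v := c) (by simp [hwc]) .nil)))
  isPath := by
    rw [Walk.isPath_def]
    simp [hab, hbc, hac, hua, hub, huc, hwa, hwb, hwc, huw,
      Ne.symm hua, Ne.symm hwa, Ne.symm hwb, Ne.symm huw]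
  contains := by
    intro s hs
    simp only [Finset.coe_insert, Set.mem_insert_iff, Finset.coe_singleton,
      Set.mem_singleton_iff] at hs
    simp only [Walk.support_cons, Walk.support_nil, List.mem_cons, List.mem_singleton]
    tauto

@[simp] lemma pathC_support (hab : a ≠ b) (hbc : b ≠ c) (hac : a ≠ c)
    (hua : u ≠ a) (hub : u ≠ b) (huc : u ≠ c)
    (hwa : w ≠ a) (hwb : w ≠ b) (hwc : w ≠ c) (huw : u ≠ w) :
    (pathC hab hbc hac hua hub huc hwa hwb hwc huw).walk.support = [a, u, b, w, c] := rfl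

@[simp] lemma pathC_edges (hab : a ≠ b) (hbc : b ≠ c) (hac : a ≠ c)
    (hua : u ≠ a) (hub : u ≠ b) (huc : u ≠ c)
    (hwa : w ≠ a) (hwb : w ≠ b) (hwc : w ≠ c) (huw : u ≠ w) :
    (pathC hab hbc hac hua hub huc hwa hwb hwc huw).walk.edges
      = [s(a,u), s(u,b), s(b,w), s(w,c)] := rfl

end Shapes

section Pairs

variable {a b c u w v u' w' : Fin n}

lemma iAC : {x | x ∈ [a,b,c]} ∩ {x | x ∈ [a,u,b,w,c]}
    = (↑({a,b,c} : Finset (Fin n)) : Set (Fin n)) := by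
  ext x; simp; tauto

lemma iAB : {x | x ∈ [a,b,c]} ∩ {x | x ∈ [b,v,a,c]}
    = (↑({a,b,c} : Finset (Fin n)) : Set (Fin n)) := by
  ext x; simp; tauto

lemma iBC (hvu : v ≠ u) (hvw : v ≠ w) :
    {x | x ∈ [b,v,a,c]} ∩ {x | x ∈ [a,u,b,w,c]}
    = (↑({a,b,c} : Finset (Fin n)) : Set (Fin n)) := by
  ext x; simp; aesop

lemma iCC (h1 : u ≠ u') (h2 : u ≠ w') (h3 : w ≠ u') (h4 : w ≠ w') :
    {x | x ∈ [a,u,b,w,c]} ∩ {x | x ∈ [a,u',b,w',c]}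
    = (↑({a,b,c} : Finset (Fin n)) : Set (Fin n)) := by
  ext x; simp; aesop

lemma eAB (hab : a ≠ b) (hbc : b ≠ c) (hac : a ≠ c)
    (hva : v ≠ a) (hvb : v ≠ b) (hvc : v ≠ c) :
    ∀ e, e ∈ [s(a,b), s(b,c)] → e ∈ [s(b,v), s(v,a), s(a,c)] → False := by
  intro e h1 h2
  simp only [List.mem_cons, List.not_mem_nil, or_false] at h1 h2
  rcases h1 with rfl|rfl <;> rcases h2 with h|h|h <;> rw [Sym2.eq_iff] at h <;> tauto

lemma eAC (hab : a ≠ b) (hbc : b ≠ c) (hac : a ≠ c)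
    (hua : u ≠ a) (hub : u ≠ b) (huc : u ≠ c)
    (hwa : w ≠ a) (hwb : w ≠ b) (hwc : w ≠ c) :
    ∀ e, e ∈ [s(a,b), s(b,c)] → e ∈ [s(a,u), s(u,b), s(b,w), s(w,c)] → False := by
  intro e h1 h2
  simp only [List.mem_cons, List.not_mem_nil, or_false] at h1 h2
  rcases h1 with rfl|rfl <;> rcases h2 with h|h|h|h <;> rw [Sym2.eq_iff] at h <;> tauto

lemma eBC (hab : a ≠ b) (hbc : b ≠ c) (hac : a ≠ c)
    (hva : v ≠ a) (hvb : v ≠ b) (hvc : v ≠ c)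
    (hua : u ≠ a) (hub : u ≠ b) (huc : u ≠ c)
    (hwa : w ≠ a) (hwb : w ≠ b) (hwc : w ≠ c)
    (hvu : v ≠ u) (hvw : v ≠ w) :
    ∀ e, e ∈ [s(b,v), s(v,a), s(a,c)] → e ∈ [s(a,u), s(u,b), s(b,w), s(w,c)] → False := by
  intro e h1 h2
  simp only [List.mem_cons, List.not_mem_nil, or_false] at h1 h2
  rcases h1 with rfl|rfl|rfl <;> rcases h2 with h|h|h|h <;> rw [Sym2.eq_iff] at h <;> tauto

lemma eCC (hab : a ≠ b) (hbc : b ≠ c) (hac : a ≠ c)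
    (hua : u ≠ a) (hub : u ≠ b) (huc : u ≠ c)
    (hwa : w ≠ a) (hwb : w ≠ b) (hwc : w ≠ c)
    (hua' : u' ≠ a) (hub' : u' ≠ b) (huc' : u' ≠ c)
    (hwa' : w' ≠ a) (hwb' : w' ≠ b) (hwc' : w' ≠ c)
    (h1 : u ≠ u') (h2 : u ≠ w') (h3 : w ≠ u') (h4 : w ≠ w') :
    ∀ e, e ∈ [s(a,u), s(u,b), s(b,w), s(w,c)] →
      e ∈ [s(a,u'), s(u',b), s(b,w'), s(w',c)] → False := by
  intro e h1' h2'
  simp only [List.mem_cons, List.not_mem_nil, or_false] at h1' h2'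
  rcases h1' with rfl|rfl|rfl|rfl <;> rcases h2' with h|h|h|h <;> rw [Sym2.eq_iff] at h <;> tauto

end Pairs

set_option maxHeartbeats 2000000 in
lemma construct (hn : 3 ≤ n) {a b c : Fin n} (hab : a ≠ b) (hbc : b ≠ c) (hac : a ≠ c) :
    ∃ P : Fin (n/2) → SteinerPath (⊤ : SimpleGraph (Fin n)) ↑({a,b,c} : Finset (Fin n)),
      IDFamily _ _ P := by
  classical
  have h3 : ({a,b,c} : Finset (Fin n)).card = 3 := by
    rw [card_insert_of_notMem (by simp [hab, hac]),
      card_insert_of_notMem (by simp [hbc]), card_singleton]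
  have hUcard : (univ \ ({a,b,c} : Finset (Fin n))).card = n - 3 := by
    rw [card_sdiff_of_subset (subset_univ _), card_univ, Fintype.card_fin, h3]
  set e := (univ \ ({a,b,c} : Finset (Fin n))).equivFin with he
  set u : Fin (n-3) → Fin n := fun m => (e.symm (Fin.cast hUcard.symm m) : Fin n) with hu
  have huinj : Function.Injective u := by
    intro m1 m2 h
    have h2 := e.symm.injective (Subtype.coe_injective h)
    have h3' := congrArg Fin.val h2
    simpa [Fin.ext_iff] using h3'
  have humem : ∀ m, u m ∈ univ \ ({a,b,c} : Finset (Fin n)) := fun m => (e.symm _).2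
  have hua : ∀ m, u m ≠ a := by
    intro m h; have := humem m; rw [h] at this; simp at this
  have hub : ∀ m, u m ≠ b := by
    intro m h; have := humem m; rw [h] at this; simp at this
  have huc : ∀ m, u m ≠ c := by
    intro m h; have := humem m; rw [h] at this; simp at this
  by_cases hpar : n % 2 = 1
  · -- n odd
    have hidx : ∀ i : Fin (n/2), (i:ℕ) ≠ 0 → (2*(i:ℕ)-2 < n-3 ∧ 2*(i:ℕ)-1 < n-3) := by
      intro i h; have := i.isLt; omega
    refine ⟨fun i => if h0 : (i:ℕ) = 0 then pathA hab hbc hac else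
      pathC hab hbc hac
        (hua ⟨2*(i:ℕ)-2, (hidx i h0).1⟩) (hub ⟨2*(i:ℕ)-2, (hidx i h0).1⟩)
        (huc ⟨2*(i:ℕ)-2, (hidx i h0).1⟩)
        (hua ⟨2*(i:ℕ)-1, (hidx i h0).2⟩) (hub ⟨2*(i:ℕ)-1, (hidx i h0).2⟩)
        (huc ⟨2*(i:ℕ)-1, (hidx i h0).2⟩)
        (huinj.ne (Fin.ne_of_val_ne (by simp; omega))), ?_⟩
    intro i j hij
    have hvij : (i:ℕ) ≠ (j:ℕ) := fun h => hij (Fin.ext h)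
    dsimp only
    by_cases h0i : (i:ℕ) = 0 <;> by_cases h0j : (j:ℕ) = 0
    · exact absurd (Fin.ext (by omega)) hij
    · rw [dif_pos h0i, dif_neg h0j]
      constructor
      · rw [pathA_support, pathC_support]; exact iAC
      · rw [pathA_edges, pathC_edges]
        intro e' h1 h2
        exact eAC hab hbc hac (hua _) (hub _) (huc _) (hua _) (hub _) (huc _) e' h1 h2
    · rw [dif_neg h0i, dif_pos h0j]
      constructor
      · rw [pathA_support, pathC_support, Set.inter_comm]; exact iAC
      · rw [pathA_edges, pathC_edges]
        intro e' h1 h2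
        exact eAC hab hbc hac (hua _) (hub _) (huc _) (hua _) (hub _) (huc _) e' h2 h1
    · rw [dif_neg h0i, dif_neg h0j]
      constructor
      · rw [pathC_support, pathC_support]
        exact iCC (huinj.ne (Fin.ne_of_val_ne (by simp; omega)))
          (huinj.ne (Fin.ne_of_val_ne (by simp; omega)))
          (huinj.ne (Fin.ne_of_val_ne (by simp; omega)))
          (huinj.ne (Fin.ne_of_val_ne (by simp; omega)))
      · rw [pathC_edges, pathC_edges]
        intro e' h1 h2
        exact eCC hab hbc hac (hua _) (hub _) (huc _) (hua _) (hub _) (huc _)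
          (hua _) (hub _) (huc _) (hua _) (hub _) (huc _)
          (huinj.ne (Fin.ne_of_val_ne (by simp; omega)))
          (huinj.ne (Fin.ne_of_val_ne (by simp; omega)))
          (huinj.ne (Fin.ne_of_val_ne (by simp; omega)))
          (huinj.ne (Fin.ne_of_val_ne (by simp; omega))) e' h1 h2
  · -- n even
    have hpar' : n % 2 = 0 := by omega
    have hz : (0:ℕ) < n - 3 := by omega
    have hidx : ∀ i : Fin (n/2), (i:ℕ) ≠ 0 → (i:ℕ) ≠ 1 →
        (2*(i:ℕ)-3 < n-3 ∧ 2*(i:ℕ)-2 < n-3) := by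
      intro i h h'; have := i.isLt; omega
    refine ⟨fun i => if h0 : (i:ℕ) = 0 then pathA hab hbc hac else
      if h1 : (i:ℕ) = 1 then
        pathB hab hbc hac (hua ⟨0, hz⟩) (hub ⟨0, hz⟩) (huc ⟨0, hz⟩)
      else
      pathC hab hbc hac
        (hua ⟨2*(i:ℕ)-3, (hidx i h0 h1).1⟩) (hub ⟨2*(i:ℕ)-3, (hidx i h0 h1).1⟩)
        (huc ⟨2*(i:ℕ)-3, (hidx i h0 h1).1⟩)
        (hua ⟨2*(i:ℕ)-2, (hidx i h0 h1).2⟩) (hub ⟨2*(i:ℕ)-2, (hidx i h0 h1).2⟩)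
        (huc ⟨2*(i:ℕ)-2, (hidx i h0 h1).2⟩)
        (huinj.ne (Fin.ne_of_val_ne (by simp; omega))), ?_⟩
    intro i j hij
    have hvij : (i:ℕ) ≠ (j:ℕ) := fun h => hij (Fin.ext h)
    dsimp only
    by_cases h0i : (i:ℕ) = 0
    · by_cases h0j : (j:ℕ) = 0
      · exact absurd (Fin.ext (by omega)) hij
      · by_cases h1j : (j:ℕ) = 1
        · rw [dif_pos h0i, dif_neg h0j, dif_pos h1j]
          constructor
          · rw [pathA_support, pathB_support]; exact iAB
          · rw [pathA_edges, pathB_edges]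
            intro e' h1 h2
            exact eAB hab hbc hac (hua _) (hub _) (huc _) e' h1 h2
        · rw [dif_pos h0i, dif_neg h0j, dif_neg h1j]
          constructor
          · rw [pathA_support, pathC_support]; exact iAC
          · rw [pathA_edges, pathC_edges]
            intro e' h1 h2
            exact eAC hab hbc hac (hua _) (hub _) (huc _) (hua _) (hub _) (huc _) e' h1 h2
    · by_cases h1i : (i:ℕ) = 1
      · by_cases h0j : (j:ℕ) = 0
        · rw [dif_neg h0i, dif_pos h1i, dif_pos h0j]
          constructor
          · rw [pathA_support, pathB_support, Set.inter_comm]; exact iAB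
          · rw [pathA_edges, pathB_edges]
            intro e' h1 h2
            exact eAB hab hbc hac (hua _) (hub _) (huc _) e' h2 h1
        · by_cases h1j : (j:ℕ) = 1
          · exact absurd (Fin.ext (by omega)) hij
          · rw [dif_neg h0i, dif_pos h1i, dif_neg h0j, dif_neg h1j]
            constructor
            · rw [pathB_support, pathC_support]
              exact iBC (huinj.ne (Fin.ne_of_val_ne (by simp; omega)))
                (huinj.ne (Fin.ne_of_val_ne (by simp; omega)))
            · rw [pathB_edges, pathC_edges]
              intro e' h1 h2
              exact eBC hab hbc hac (hua _) (hub _) (huc _) (hua _) (hub _) (huc _)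
                (hua _) (hub _) (huc _)
                (huinj.ne (Fin.ne_of_val_ne (by simp; omega)))
                (huinj.ne (Fin.ne_of_val_ne (by simp; omega))) e' h1 h2
      · by_cases h0j : (j:ℕ) = 0
        · rw [dif_neg h0i, dif_neg h1i, dif_pos h0j]
          constructor
          · rw [pathA_support, pathC_support, Set.inter_comm]; exact iAC
          · rw [pathA_edges, pathC_edges]
            intro e' h1 h2
            exact eAC hab hbc hac (hua _) (hub _) (huc _) (hua _) (hub _) (huc _) e' h2 h1
        · by_cases h1j : (j:ℕ) = 1
          · rw [dif_neg h0i, dif_neg h1i, dif_neg h0j, dif_pos h1j]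
            constructor
            · rw [pathB_support, pathC_support, Set.inter_comm]
              exact iBC (huinj.ne (Fin.ne_of_val_ne (by simp; omega)))
                (huinj.ne (Fin.ne_of_val_ne (by simp; omega)))
            · rw [pathB_edges, pathC_edges]
              intro e' h1 h2
              exact eBC hab hbc hac (hua _) (hub _) (huc _) (hua _) (hub _) (huc _)
                (hua _) (hub _) (huc _)
                (huinj.ne (Fin.ne_of_val_ne (by simp; omega)))
                (huinj.ne (Fin.ne_of_val_ne (by simp; omega))) e' h2 h1
          · rw [dif_neg h0i, dif_neg h1i, dif_neg h0j, dif_neg h1j]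
            constructor
            · rw [pathC_support, pathC_support]
              exact iCC (huinj.ne (Fin.ne_of_val_ne (by simp; omega)))
                (huinj.ne (Fin.ne_of_val_ne (by simp; omega)))
                (huinj.ne (Fin.ne_of_val_ne (by simp; omega)))
                (huinj.ne (Fin.ne_of_val_ne (by simp; omega)))
            · rw [pathC_edges, pathC_edges]
              intro e' h1 h2
              exact eCC hab hbc hac (hua _) (hub _) (huc _) (hua _) (hub _) (huc _)
                (hua _) (hub _) (huc _) (hua _) (hub _) (huc _)
                (huinj.ne (Fin.ne_of_val_ne (by simp; omega)))
                (huinj.ne (Fin.ne_of_val_ne (by simp; omega)))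
                (huinj.ne (Fin.ne_of_val_ne (by simp; omega)))
                (huinj.ne (Fin.ne_of_val_ne (by simp; omega))) e' h1 h2


lemma spn_eq {n : ℕ} (hn : 3 ≤ n) {a b c : Fin n} (hab : a ≠ b) (hbc : b ≠ c) (hac : a ≠ c) :
    steinerPathNumber (⊤ : SimpleGraph (Fin n)) ↑({a,b,c} : Finset (Fin n)) = n / 2 := by
  obtain ⟨P, hP⟩ := construct hn hab hbc hac
  have hmem : n / 2 ∈ {t | ∃ P : Fin t → SteinerPath (⊤ : SimpleGraph (Fin n))
      ↑({a,b,c} : Finset (Fin n)), IDFamily _ _ P} := ⟨P, hP⟩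
  have hub : ∀ t ∈ {t | ∃ P : Fin t → SteinerPath (⊤ : SimpleGraph (Fin n))
      ↑({a,b,c} : Finset (Fin n)), IDFamily _ _ P}, t ≤ n / 2 := by
    rintro t ⟨Q, hQ⟩
    exact family_bound hn hab hac hbc Q hQ
  exact le_antisymm (csSup_le ⟨_, hmem⟩ hub) (le_csSup ⟨n / 2, hub⟩ hmem)

/-- The `3`-path connectivity of the complete graph `K_n` for `n ≥ 3`. -/
theorem stmt2 (n : ℕ) (hn : 3 ≤ n) :
    pathConnectivity (⊤ : SimpleGraph (Fin n)) 3 = n / 2 := by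
  have hex : ∃ S : Finset (Fin n), S.card = 3 := by
    obtain ⟨t, -, ht⟩ := Finset.exists_subset_card_eq
      (show 3 ≤ (univ : Finset (Fin n)).card by simpa using hn)
    exact ⟨t, ht⟩
  obtain ⟨S, hS⟩ := hex
  have hmem : n / 2 ∈ {m | ∃ S : Finset (Fin n), S.card = 3 ∧
      steinerPathNumber (⊤ : SimpleGraph (Fin n)) (↑S) = m} := by
    obtain ⟨x, y, z, hxy, hxz, hyz, rfl⟩ := Finset.card_eq_three.mp hS
    exact ⟨{x,y,z}, hS, spn_eq hn hxy hyz hxz⟩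
  have hall : ∀ m ∈ {m | ∃ S : Finset (Fin n), S.card = 3 ∧
      steinerPathNumber (⊤ : SimpleGraph (Fin n)) (↑S) = m}, m = n / 2 := by
    rintro m ⟨T, hT, rfl⟩
    obtain ⟨x, y, z, hxy, hxz, hyz, rfl⟩ := Finset.card_eq_three.mp hT
    exact spn_eq hn hxy hyz hxz
  refine le_antisymm (Nat.sInf_le hmem) (le_csInf ⟨_, hmem⟩ fun m hm => (hall m hm) ▸ le_rfl)
end

section
/- The data center network D_{k,n} (k ≥ 0, n ≥ 2) is (n+k-1)-regular, and its vertex connectivity and edge connectivity both equal n + k - 1. -/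
open SimpleGraph
/-- Number of vertices of `D_{k,n}`. -/
def dcellT (n : ℕ) : ℕ → ℕ
  | 0 => n
  | k+1 => dcellT n k * (dcellT n k + 1)

/-- Vertex set of `D_{k,n}`. -/
def DCellVtx (n : ℕ) : ℕ → Type
  | 0 => Fin n
  | k+1 => Fin (dcellT n k + 1) × DCellVtx n k

/-- The uid of a vertex of `D_{k,n}`. -/
def dcellUid (n : ℕ) : (k : ℕ) → DCellVtx n k → ℕ
  | 0, a => a.val
  | k+1, a => dcellUid n k a.2 + a.1.val * dcellT n k

/-- Adjacency in `D_{k,n}`: inside a common copy of `D_{k-1,n}` use the recursive rule;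
between two copies use the DCell connection rule. -/
def dcellAdj (n : ℕ) : (k : ℕ) → DCellVtx n k → DCellVtx n k → Prop
  | 0, a, b => a ≠ b
  | k+1, a, b =>
      (a.1 = b.1 ∧ dcellAdj n k a.2 b.2) ∨
      (a.1.val < b.1.val ∧ a.1.val = dcellUid n k b.2 ∧ b.1.val = dcellUid n k a.2 + 1) ∨
      (b.1.val < a.1.val ∧ b.1.val = dcellUid n k a.2 ∧ a.1.val = dcellUid n k b.2 + 1)

/-- The `k`-dimensional data center network with `n`-port switches. -/
def DCell (n k : ℕ) : SimpleGraph (DCellVtx n k) where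
  Adj := dcellAdj n k
  symm := by
    induction k with
    | zero => constructor; intro a b h; exact h.symm
    | succ k ih =>
      constructor
      rintro a b (⟨h1, h2⟩ | ⟨h1, h2, h3⟩ | ⟨h1, h2, h3⟩)
      · exact Or.inl ⟨h1.symm, ih.symm _ _ h2⟩
      · exact Or.inr (Or.inr ⟨h1, h2, h3⟩)
      · exact Or.inr (Or.inl ⟨h1, h2, h3⟩)
  loopless := by
    induction k with
    | zero => constructor; intro a h; exact h rfl
    | succ k ih =>
      constructor
      rintro a (⟨h1, h2⟩ | ⟨h1, h2, h3⟩ | ⟨h1, h2, h3⟩)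
      · exact ih.irrefl a.2 h2
      · omega
      · omega

/-- Two vertices of `D_{k,n}` lie in a common copy of `K_n` (level-0 cell) iff all
coordinates except the last agree. -/
def dcellSameCell (n : ℕ) : (k : ℕ) → DCellVtx n k → DCellVtx n k → Prop
  | 0, _, _ => True
  | k+1, a, b => a.1 = b.1 ∧ dcellSameCell n k a.2 b.2
/-- The (vertex) connectivity of `G`: the least size of a set of vertices whose removal
disconnects the graph or reduces it to at most one vertex. -/
noncomputable def vertexConnectivity {V : Type*} (G : SimpleGraph V) : ℕ :=
  sInf {m | ∃ S : Set V, S.ncard = m ∧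
    (¬ (G.induce (Sᶜ : Set V)).Connected ∨ (Sᶜ : Set V).Subsingleton)}

/-- The edge connectivity of `G`: the least size of a set of edges whose removal
disconnects the graph. -/
noncomputable def edgeConnectivity {V : Type*} (G : SimpleGraph V) : ℕ :=
  sInf {m | ∃ F : Set (Sym2 V), F.ncard = m ∧ ¬ (G.deleteEdges F).Connected}

/-- `G` is `k`-connected. -/
def NConnected {V : Type*} (k : ℕ) (G : SimpleGraph V) : Prop :=
  k < Nat.card V ∧ ∀ S : Set V, S.ncard < k → (G.induce (Sᶜ : Set V)).Connected

/-! Each vertex has `n - 1` neighbours in its copy of `K_n` and exactly one more at every level,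
so `D_{k,n}` is `(n + k - 1)`-regular, and deleting a neighbourhood (or the edges at a vertex)
isolates a vertex. For the lower bounds we show, by induction on `k`, that removing any set `S`
of vertices and `F` of edges with `|S| + |F| ≤ n + k - 2` leaves `D_{k,n}` connected. If every
copy of `D_{k-1,n}` suffers at most `n + k - 3` removals, each stays connected, and in the graph of
copies at most `|S| + |F|` pairs are missing, because two copies are joined by a single edge and
each removed vertex or edge destroys at most one such edge; a graph on `m` vertices missing at
most `m - 2` edges is connected, and there are `t_{k-1,n} + 1 > n + k - 1` copies. Otherwise
one copy has absorbed all removals: the other copies are intact and pairwise joined, and every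
surviving vertex of the damaged copy keeps its edge into another copy. -/

open Function

theorem Set.subset_range_of_ncard_le_ncard_preimage {α β : Type*} {f : α → β} {s : Set β}
    (hf : Injective f) (hs : s.Finite) (h : s.ncard ≤ (f ⁻¹' s).ncard) : s ⊆ Set.range f := by
  have himage : f '' (f ⁻¹' s) = s :=
    Set.eq_of_subset_of_ncard_le (Set.image_preimage_subset f s)
      (by rwa [Set.ncard_image_of_injective _ hf]) hs
  exact himage ▸ Set.image_subset_range f _

namespace SimpleGraph

variable {V W I : Type*}

def deleteVertsEdges (G : SimpleGraph V) (S : Set V) (F : Set (Sym2 V)) : SimpleGraph ↥Sᶜ :=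
  (G.deleteEdges F).induce Sᶜ

@[simp]
theorem deleteVertsEdges_adj {G : SimpleGraph V} {S : Set V} {F : Set (Sym2 V)} {u v : ↥Sᶜ} :
    (G.deleteVertsEdges S F).Adj u v ↔ G.Adj u v ∧ s(u.1, v.1) ∉ F :=
  deleteEdges_adj ..

def Hom.deleteVertsEdges {G : SimpleGraph V} {G' : SimpleGraph W} (f : G →g G') (S : Set W)
    (F : Set (Sym2 W)) :
    G.deleteVertsEdges (f ⁻¹' S) (Sym2.map f ⁻¹' F) →g G'.deleteVertsEdges S F where
  toFun v := ⟨f v, v.2⟩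
  map_rel' h := by
    rw [deleteVertsEdges_adj] at h ⊢
    exact ⟨f.map_adj h.1, by simpa [Sym2.map_mk] using h.2⟩

theorem connected_of_ncard_edgeSet_compl_add_two_le [Finite V] {G : SimpleGraph V}
    (h : Gᶜ.edgeSet.ncard + 2 ≤ Nat.card V) : G.Connected := by
  classical
  have : Nonempty V := Nat.card_pos_iff.mp (by omega) |>.1
  refine ⟨fun a b => ?_⟩
  by_cases hab : a = b
  · exact hab ▸ Reachable.refl a
  by_cases hadj : G.Adj a b
  · exact hadj.reachable
  by_contra hnot
  have hcommon : ∀ c, G.Adj a c → ¬ G.Adj c b := fun c hac hcb =>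
    hnot (hac.reachable.trans hcb.reachable)
  -- Without a common neighbour, every `c ≠ a` yields its own non-edge at `a` or at `b`.
  let g : V → Sym2 V := fun c => if G.Adj a c then s(c, b) else s(a, c)
  have hmaps : ∀ c ∈ ({a}ᶜ : Set V), g c ∈ Gᶜ.edgeSet := by
    intro c hca
    by_cases hac : G.Adj a c
    · simp only [g, if_pos hac, mem_edgeSet, compl_adj]
      exact ⟨fun hcb => hadj (hcb ▸ hac), hcommon c hac⟩
    · simp only [g, if_neg hac, mem_edgeSet, compl_adj]
      exact ⟨Ne.symm hca, hac⟩
  have hinj : Set.InjOn g ({a}ᶜ : Set V) := by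
    intro c hc d hd hcd
    simp only [Set.mem_compl_iff, Set.mem_singleton_iff] at hc hd
    simp only [g] at hcd
    split_ifs at hcd <;> rw [Sym2.eq_iff] at hcd <;> grind
  have hle := Set.ncard_le_ncard_of_injOn g hmaps hinj
  rw [Set.ncard_compl, Set.ncard_singleton] at hle
  omega

theorem connected_of_connected_map {G : SimpleGraph V} (p : V → I) (hp : Surjective p)
    (hfib : ∀ u v, p u = p v → G.Reachable u v) (h : (G.map p).Connected) : G.Connected := by
  have key : ∀ {i j : I} (w : (G.map p).Walk i j) (u v : V), p u = i → p v = j →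
      G.Reachable u v := by
    intro i j w
    induction w with
    | nil => exact fun u v hu hv => hfib u v (hu.trans hv.symm)
    | cons hadj _ ih =>
      intro u v hu hv
      obtain ⟨-, u', v', huv', hu', hv'⟩ := hadj
      exact (hfib u u' (hu.trans hu'.symm)).trans (huv'.reachable.trans (ih v' v hv' hv))
  have : Nonempty V := let ⟨i⟩ := h.nonempty; ⟨(hp i).choose⟩
  exact ⟨fun u v => let ⟨w⟩ := h.preconnected (p u) (p v); key w u v rfl rfl⟩

end SimpleGraph

section Connectivity

variable {V : Type*} (G : SimpleGraph V)

theorem vertexConnectivity_le_ncard_neighborSet (v : V) :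
    vertexConnectivity G ≤ (G.neighborSet v).ncard := by
  refine Nat.sInf_le ⟨_, rfl, ?_⟩
  rw [or_iff_not_imp_right, Set.not_subsingleton_iff]
  intro hnontriv hconn
  have := hnontriv.coe_sort
  obtain ⟨u, hvu⟩ := hconn.preconnected.exists_adj_of_nontrivial ⟨v, G.irrefl⟩
  exact u.2 hvu

theorem edgeConnectivity_le_ncard_neighborSet [Nontrivial V] (v : V) :
    edgeConnectivity G ≤ (G.neighborSet v).ncard := by
  refine Nat.sInf_le ⟨G.incidenceSet v, ?_, fun hconn => ?_⟩
  · classical exact Nat.card_congr (G.incidenceSetEquivNeighborSet v)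
  · obtain ⟨u, hvu⟩ := hconn.preconnected.exists_adj_of_nontrivial v
    rw [deleteEdges_adj] at hvu
    exact hvu.2 ⟨hvu.1, Sym2.mem_mk_left v u⟩

variable {G}

theorem NConnected.le_vertexConnectivity [Finite V] {m : ℕ} (h : NConnected m G) :
    m ≤ vertexConnectivity G := by
  refine le_csInf ⟨_, Set.univ, rfl, Or.inr (by simp)⟩ ?_
  rintro _ ⟨S, rfl, hS⟩
  by_contra! hlt
  refine hS.elim (· (h.2 S hlt)) fun hsub => ?_
  have := Set.ncard_add_ncard_compl S
  have := Set.ncard_le_one_iff_subsingleton.mpr hsub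
  have := h.1
  omega

theorem le_edgeConnectivity [Nontrivial V] {m : ℕ}
    (h : ∀ F : Set (Sym2 V), F.ncard < m → (G.deleteEdges F).Connected) :
    m ≤ edgeConnectivity G := by
  refine le_csInf ⟨_, Set.univ, rfl, fun hconn => ?_⟩ ?_
  · obtain ⟨u, hu⟩ := hconn.preconnected.exists_adj_of_nontrivial (Classical.arbitrary V)
    exact ((deleteEdges_adj ..).1 hu).2 trivial
  · rintro _ ⟨F, rfl, hF⟩
    by_contra! hlt
    exact hF (h F hlt)

end Connectivity

namespace DCell

variable {n k : ℕ}

def uidEquiv (n : ℕ) : (k : ℕ) → DCellVtx n k ≃ Fin (dcellT n k)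
  | 0 => Equiv.refl _
  | k + 1 => ((Equiv.refl _).prodCongr (uidEquiv n k)).trans
      (finProdFinEquiv.trans (finCongr (Nat.mul_comm _ _)))

theorem uidEquiv_apply : ∀ k (x : DCellVtx n k), (uidEquiv n k x : ℕ) = dcellUid n k x
  | 0, _ => rfl
  | k + 1, x => by
    change (uidEquiv n k x.2 : ℕ) + dcellT n k * x.1 = dcellUid n k x.2 + x.1 * dcellT n k
    rw [uidEquiv_apply, Nat.mul_comm]

theorem dcellUid_lt (x : DCellVtx n k) : dcellUid n k x < dcellT n k :=
  uidEquiv_apply k x ▸ (uidEquiv n k x).isLt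

theorem dcellUid_injective : Injective (dcellUid n k) := fun x y h =>
  (uidEquiv n k).injective (Fin.ext (by rw [uidEquiv_apply, uidEquiv_apply, h]))

theorem exists_dcellUid_eq {m : ℕ} (hm : m < dcellT n k) : ∃ x, dcellUid n k x = m :=
  ⟨(uidEquiv n k).symm ⟨m, hm⟩, by rw [← uidEquiv_apply, Equiv.apply_symm_apply]⟩

instance : Finite (DCellVtx n k) := Finite.of_equiv _ (uidEquiv n k).symm

theorem card_vtx : Nat.card (DCellVtx n k) = dcellT n k := by
  rw [Nat.card_congr (uidEquiv n k), Nat.card_fin]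

theorem add_le_dcellT (hn : 2 ≤ n) : ∀ k, n + k ≤ dcellT n k
  | 0 => le_rfl
  | k + 1 => by
    have := add_le_dcellT hn k
    simp only [dcellT]
    nlinarith

def copy (j : Fin (dcellT n k + 1)) : DCell n k →g DCell n (k + 1) where
  toFun x := (j, x)
  map_rel' h := Or.inl ⟨rfl, h⟩

theorem copy_injective (j : Fin (dcellT n k + 1)) : Injective (copy j) :=
  Prod.mk_right_injective j

theorem adj_mk_mk_iff {i : Fin (dcellT n k + 1)} {x y : DCellVtx n k} :
    (DCell n (k + 1)).Adj (i, x) (i, y) ↔ (DCell n k).Adj x y := by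
  refine ⟨fun h => ?_, (copy i).map_adj⟩
  rcases h with ⟨-, h⟩ | ⟨h, -⟩ | ⟨h, -⟩
  · exact h
  all_goals exact absurd h (lt_irrefl _)

theorem exists_adj_of_lt {i j : Fin (dcellT n k + 1)} (h : i < j) :
    ∃ x y, (DCell n (k + 1)).Adj (i, x) (j, y) := by
  have hj : j.val ≤ dcellT n k := Nat.lt_succ_iff.mp j.isLt
  obtain ⟨x, hx⟩ := exists_dcellUid_eq (show j.val - 1 < dcellT n k by omega)
  obtain ⟨y, hy⟩ := exists_dcellUid_eq (show i.val < dcellT n k by omega)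
  exact ⟨x, y, Or.inr (Or.inl ⟨h, hy.symm, show j.val = dcellUid n k x + 1 by omega⟩)⟩

theorem exists_adj_of_ne {i j : Fin (dcellT n k + 1)} (h : i ≠ j) :
    ∃ x y, (DCell n (k + 1)).Adj (i, x) (j, y) := by
  rcases h.lt_or_gt with h | h
  · exact exists_adj_of_lt h
  · obtain ⟨y, x, hyx⟩ := exists_adj_of_lt h
    exact ⟨x, y, hyx.symm⟩

theorem existsUnique_cross_adj (a : DCellVtx n (k + 1)) :
    ∃! c : DCellVtx n (k + 1), c.1 ≠ a.1 ∧ (DCell n (k + 1)).Adj a c := by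
  obtain ⟨i, x⟩ := a
  have hx := dcellUid_lt x
  have hi : i.val ≤ dcellT n k := Nat.lt_succ_iff.mp i.isLt
  refine existsUnique_of_exists_of_unique ?_ ?_
  · by_cases hix : i.val ≤ dcellUid n k x
    · obtain ⟨y, hy⟩ := exists_dcellUid_eq (show i.val < dcellT n k by omega)
      refine ⟨(⟨dcellUid n k x + 1, by omega⟩, y), ?_, Or.inr (Or.inl ⟨?_, hy.symm, rfl⟩)⟩
      · simp only [ne_eq, Fin.ext_iff]; omega
      · show i.val < dcellUid n k x + 1; omega
    · obtain ⟨y, hy⟩ := exists_dcellUid_eq (show i.val - 1 < dcellT n k by omega)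
      refine ⟨(⟨dcellUid n k x, by omega⟩, y), ?_, Or.inr (Or.inr ⟨?_, rfl, ?_⟩)⟩
      · simp only [ne_eq, Fin.ext_iff]; omega
      · show dcellUid n k x < i.val; omega
      · show i.val = dcellUid n k y + 1; omega
  · rintro ⟨j, y⟩ ⟨j', y'⟩ ⟨hj, hadj⟩ ⟨hj', hadj'⟩
    simp only [ne_eq, Fin.ext_iff] at hj hj'
    have key : j.val = j'.val ∧ dcellUid n k y = dcellUid n k y' := by
      rcases hadj with ⟨h, -⟩ | h | h <;> rcases hadj' with ⟨h', -⟩ | h' | h' <;>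
        simp only [Fin.ext_iff] at h h' <;> omega
    exact Prod.ext (Fin.ext key.1) (dcellUid_injective key.2)

noncomputable def cross (a : DCellVtx n (k + 1)) : DCellVtx n (k + 1) :=
  (existsUnique_cross_adj a).exists.choose

theorem cross_fst_ne (a : DCellVtx n (k + 1)) : (cross a).1 ≠ a.1 :=
  (existsUnique_cross_adj a).exists.choose_spec.1

theorem adj_cross (a : DCellVtx n (k + 1)) : (DCell n (k + 1)).Adj a (cross a) :=
  (existsUnique_cross_adj a).exists.choose_spec.2

theorem eq_cross_of_adj {a c : DCellVtx n (k + 1)} (h : (DCell n (k + 1)).Adj a c)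
    (hne : c.1 ≠ a.1) : c = cross a :=
  (existsUnique_cross_adj a).unique ⟨hne, h⟩ ⟨cross_fst_ne a, adj_cross a⟩

theorem neighborSet_succ (a : DCellVtx n (k + 1)) :
    (DCell n (k + 1)).neighborSet a =
      insert (cross a) (copy a.1 '' (DCell n k).neighborSet a.2) := by
  ext c
  simp only [mem_neighborSet, Set.mem_insert_iff, Set.mem_image]
  constructor
  · intro h
    by_cases hc : c.1 = a.1
    · have hc' : c = (a.1, c.2) := Prod.ext hc rfl
      rw [hc'] at h
      exact Or.inr ⟨c.2, adj_mk_mk_iff.mp h, hc'.symm⟩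
    · exact Or.inl (eq_cross_of_adj h hc)
  · rintro (rfl | ⟨z, hz, rfl⟩)
    · exact adj_cross a
    · exact adj_mk_mk_iff.mpr hz

theorem ncard_neighborSet (hn : 1 ≤ n) :
    ∀ k (v : DCellVtx n k), ((DCell n k).neighborSet v).ncard = n + k - 1
  | 0, v => by
    have : (DCell n 0).neighborSet v = {v}ᶜ := Set.ext fun _ => ne_comm
    rw [this, Set.ncard_compl, Set.ncard_singleton, card_vtx]
    rfl
  | k + 1, v => by
    have hcross : cross v ∉ copy v.1 '' (DCell n k).neighborSet v.2 := by
      rintro ⟨x, -, hx⟩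
      exact cross_fst_ne v (congrArg Prod.fst hx).symm
    rw [neighborSet_succ, Set.ncard_insert_of_notMem hcross,
      Set.ncard_image_of_injective _ (copy_injective _), ncard_neighborSet hn k]
    omega

theorem connected_deleteVertsEdges_zero {S : Set (DCellVtx n 0)} {F : Set (Sym2 (DCellVtx n 0))}
    (h : S.ncard + F.ncard + 2 ≤ n) : ((DCell n 0).deleteVertsEdges S F).Connected := by
  apply connected_of_ncard_edgeSet_compl_add_two_le
  have hF : ((DCell n 0).deleteVertsEdges S F)ᶜ.edgeSet.ncard ≤ F.ncard := by
    refine Set.ncard_le_ncard_of_injOn (Sym2.map Subtype.val) (fun e he => ?_)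
      (Sym2.map.injective Subtype.val_injective).injOn
    induction e using Sym2.ind with | _ a b => ?_
    rw [mem_edgeSet, compl_adj, deleteVertsEdges_adj, not_and_not_right] at he
    exact he.2 (Subtype.val_injective.ne he.1)
  rw [Nat.card_coe_set_eq, Set.ncard_compl, card_vtx]
  change _ ≤ n - _
  omega

section Removal

variable {S : Set (DCellVtx n (k + 1))} {F : Set (Sym2 (DCellVtx n (k + 1)))}

theorem reachable_of_copy_connected {j : Fin (dcellT n k + 1)}
    (hj : ((DCell n k).deleteVertsEdges (copy j ⁻¹' S) (Sym2.map (copy j) ⁻¹' F)).Connected)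
    {u v : ↥Sᶜ} (hu : u.1.1 = j) (hv : v.1.1 = j) :
    ((DCell n (k + 1)).deleteVertsEdges S F).Reachable u v := by
  have hlift : ∀ w : ↥Sᶜ, w.1.1 = j → ∃ x, (copy j).deleteVertsEdges S F x = w := by
    intro w hw
    have hw' : copy j w.1.2 = w.1 := Prod.ext hw.symm rfl
    exact ⟨⟨w.1.2, show copy j w.1.2 ∉ S from hw' ▸ w.2⟩, Subtype.ext hw'⟩
  obtain ⟨x, rfl⟩ := hlift u hu
  obtain ⟨y, rfl⟩ := hlift v hv
  exact (hj.preconnected x y).map _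

theorem ncard_edgeSet_compl_map_fst_le :
    (((DCell n (k + 1)).deleteVertsEdges S F).map fun u => u.1.1)ᶜ.edgeSet.ncard ≤
      S.ncard + F.ncard := by
  -- A missing pair of copies lost its unique joining edge to a removed edge or endpoint.
  let cut := (fun a => s(a, cross a)) '' S ∪ F
  have hsub : (((DCell n (k + 1)).deleteVertsEdges S F).map fun u => u.1.1)ᶜ.edgeSet ⊆
      Sym2.map Prod.fst '' cut := by
    intro e he
    induction e using Sym2.ind with | _ i j => ?_
    rw [mem_edgeSet, compl_adj] at he
    obtain ⟨x, y, hxy⟩ := exists_adj_of_ne he.1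
    have hdamaged : (i, x) ∈ S ∨ (j, y) ∈ S ∨ s((i, x), (j, y)) ∈ F := by
      by_contra! h
      exact he.2 ⟨he.1, ⟨(i, x), h.1⟩, ⟨(j, y), h.2.1⟩,
        deleteVertsEdges_adj.mpr ⟨hxy, h.2.2⟩, rfl, rfl⟩
    rcases hdamaged with h | h | h
    · refine ⟨s((i, x), (j, y)), Or.inl ⟨(i, x), h, ?_⟩, rfl⟩
      exact congrArg (s((i, x), ·)) (eq_cross_of_adj hxy he.1.symm).symm
    · refine ⟨s((j, y), (i, x)), Or.inl ⟨(j, y), h, ?_⟩, Sym2.eq_swap⟩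
      exact congrArg (s((j, y), ·)) (eq_cross_of_adj hxy.symm he.1).symm
    · exact ⟨_, Or.inr h, rfl⟩
  calc _ ≤ (Sym2.map Prod.fst '' cut).ncard := Set.ncard_le_ncard hsub
    _ ≤ cut.ncard := Set.ncard_image_le
    _ ≤ ((fun a => s(a, cross a)) '' S).ncard + F.ncard := Set.ncard_union_le _ _
    _ ≤ S.ncard + F.ncard := by gcongr; exact Set.ncard_image_le

theorem connected_of_copies_connected
    (hcopy : ∀ j, ((DCell n k).deleteVertsEdges (copy j ⁻¹' S)
      (Sym2.map (copy j) ⁻¹' F)).Connected)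
    (hSF : S.ncard + F.ncard + 2 ≤ dcellT n k + 1) :
    ((DCell n (k + 1)).deleteVertsEdges S F).Connected := by
  refine connected_of_connected_map (fun u => u.1.1) (fun j => ?_)
    (fun u v h => reachable_of_copy_connected (hcopy u.1.1) rfl h.symm) ?_
  · obtain ⟨x, hx⟩ := (hcopy j).nonempty.some
    exact ⟨⟨copy j x, hx⟩, rfl⟩
  · apply connected_of_ncard_edgeSet_compl_add_two_le
    rw [Nat.card_fin]
    have := ncard_edgeSet_compl_map_fst_le (S := S) (F := F)
    omega

theorem connected_of_damage_inside_copy [Nonempty (DCellVtx n k)] (j₀ : Fin (dcellT n k + 1))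
    (hS : ∀ a ∈ S, a.1 = j₀) (hF : ∀ e ∈ F, ∀ a ∈ e, a.1 = j₀)
    (hcopy : ∀ j ≠ j₀, ((DCell n k).deleteVertsEdges (copy j ⁻¹' S)
      (Sym2.map (copy j) ⁻¹' F)).Connected) :
    ((DCell n (k + 1)).deleteVertsEdges S F).Connected := by
  set G := (DCell n (k + 1)).deleteVertsEdges S F
  have hmem : ∀ a : DCellVtx n (k + 1), a.1 ≠ j₀ → a ∈ Sᶜ := fun a ha haS => ha (hS a haS)
  have hcross : ∀ {a b : ↥Sᶜ}, (DCell n (k + 1)).Adj a b → a.1.1 ≠ b.1.1 → G.Adj a b :=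
    fun hab hne => deleteVertsEdges_adj.mpr ⟨hab, fun he =>
      hne ((hF _ he _ (Sym2.mem_mk_left ..)).trans (hF _ he _ (Sym2.mem_mk_right ..)).symm)⟩
  have hout : ∀ u v : ↥Sᶜ, u.1.1 ≠ j₀ → v.1.1 ≠ j₀ → G.Reachable u v := by
    intro u v hu hv
    by_cases huv : u.1.1 = v.1.1
    · exact reachable_of_copy_connected (hcopy _ hu) rfl huv.symm
    obtain ⟨x, y, hxy⟩ := exists_adj_of_ne huv
    let a : ↥Sᶜ := ⟨(u.1.1, x), hmem _ hu⟩
    let b : ↥Sᶜ := ⟨(v.1.1, y), hmem _ hv⟩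
    have hua : G.Reachable u a := reachable_of_copy_connected (hcopy _ hu) rfl rfl
    have hbv : G.Reachable b v := reachable_of_copy_connected (hcopy _ hv) rfl rfl
    exact hua.trans ((hcross (a := a) (b := b) hxy huv).reachable.trans hbv)
  have hleave : ∀ u : ↥Sᶜ, ∃ v : ↥Sᶜ, v.1.1 ≠ j₀ ∧ G.Reachable u v := by
    intro u
    by_cases hu : u.1.1 = j₀
    · have hne : (cross u.1).1 ≠ j₀ := hu ▸ cross_fst_ne u.1
      exact ⟨⟨cross u.1, hmem _ hne⟩, hne,
        (hcross (adj_cross u.1) (cross_fst_ne u.1).symm).reachable⟩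
    · exact ⟨u, hu, .rfl⟩
  have : Nonempty ↥Sᶜ :=
    ⟨⟨cross (j₀, Classical.arbitrary _), hmem _ (cross_fst_ne (j₀, Classical.arbitrary _))⟩⟩
  refine ⟨fun u v => ?_⟩
  obtain ⟨u', hu', huu'⟩ := hleave u
  obtain ⟨v', hv', hvv'⟩ := hleave v
  exact huu'.trans ((hout u' v' hu' hv').trans hvv'.symm)

theorem damage_inside_copy_of_ncard_le {j₀ : Fin (dcellT n k + 1)}
    (h : S.ncard + F.ncard ≤ (copy j₀ ⁻¹' S).ncard + (Sym2.map (copy j₀) ⁻¹' F).ncard) :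
    (∀ a ∈ S, a.1 = j₀) ∧ ∀ e ∈ F, ∀ a ∈ e, a.1 = j₀ := by
  have hSj : (copy j₀ ⁻¹' S).ncard ≤ S.ncard :=
    Set.ncard_le_ncard_of_injOn _ (fun _ h => h) (copy_injective j₀).injOn
  have hFj : (Sym2.map (copy j₀) ⁻¹' F).ncard ≤ F.ncard :=
    Set.ncard_le_ncard_of_injOn _ (fun _ h => h) (Sym2.map.injective (copy_injective j₀)).injOn
  have hS := Set.subset_range_of_ncard_le_ncard_preimage (copy_injective j₀) S.toFinite
    (by omega)
  have hF := Set.subset_range_of_ncard_le_ncard_preimage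
    (Sym2.map.injective (copy_injective j₀)) F.toFinite (by omega)
  refine ⟨fun a ha => ?_, fun e he a ha => ?_⟩
  · obtain ⟨x, rfl⟩ := hS ha
    rfl
  · obtain ⟨e', rfl⟩ := hF he
    obtain ⟨x, -, rfl⟩ := Sym2.mem_map.mp ha
    rfl

end Removal

theorem connected_deleteVertsEdges (hn : 2 ≤ n) :
    ∀ k (S : Set (DCellVtx n k)) (F : Set (Sym2 (DCellVtx n k))),
      S.ncard + F.ncard + 2 ≤ n + k → ((DCell n k).deleteVertsEdges S F).Connected
  | 0, _, _, h => connected_deleteVertsEdges_zero h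
  | k + 1, S, F, h => by
    have ht := add_le_dcellT hn k
    by_cases hgood : ∀ j, (copy j ⁻¹' S).ncard + (Sym2.map (copy j) ⁻¹' F).ncard + 2 ≤ n + k
    · exact connected_of_copies_connected
        (fun j => connected_deleteVertsEdges hn k _ _ (hgood j)) (by omega)
    push Not at hgood
    obtain ⟨j₀, hj₀⟩ := hgood
    obtain ⟨hS₀, hF₀⟩ := damage_inside_copy_of_ncard_le (j₀ := j₀) (S := S) (F := F) (by omega)
    have : Nonempty (DCellVtx n k) := Nat.card_pos_iff.mp (by rw [card_vtx]; omega) |>.1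
    refine connected_of_damage_inside_copy j₀ hS₀ hF₀ fun j hj => ?_
    have hSj : copy j ⁻¹' S = ∅ :=
      Set.eq_empty_of_forall_notMem fun x hx => hj (hS₀ _ hx)
    have hFj : Sym2.map (copy j) ⁻¹' F = ∅ := Set.eq_empty_of_forall_notMem fun e he =>
      hj (hF₀ _ he _ (Sym2.mem_map.mpr ⟨_, e.out_fst_mem, rfl⟩))
    exact connected_deleteVertsEdges hn k _ _ (by rw [hSj, hFj, Set.ncard_empty, Set.ncard_empty]; omega)

theorem nconnected (hn : 2 ≤ n) (k : ℕ) : NConnected (n + k - 1) (DCell n k) := by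
  refine ⟨by rw [card_vtx]; have := add_le_dcellT hn k; omega, fun S hS => ?_⟩
  have := connected_deleteVertsEdges hn k S ∅ (by rw [Set.ncard_empty]; omega)
  rwa [deleteVertsEdges, deleteEdges_empty] at this

theorem connected_deleteEdges (hn : 2 ≤ n) (k : ℕ) {F : Set (Sym2 (DCellVtx n k))}
    (hF : F.ncard < n + k - 1) : ((DCell n k).deleteEdges F).Connected := by
  have := connected_deleteVertsEdges hn k ∅ F (by rw [Set.ncard_empty]; omega)
  rw [deleteVertsEdges, Set.compl_empty] at this
  exact (induceUnivIso _).connected_iff.mp this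

end DCell

/-- `D_{k,n}` is `(n+k-1)`-regular, with vertex connectivity and edge connectivity
both equal to `n + k - 1`. -/
theorem stmt4 (n k : ℕ) (hn : 2 ≤ n) :
    (∀ v : DCellVtx n k, ((DCell n k).neighborSet v).ncard = n + k - 1) ∧
    vertexConnectivity (DCell n k) = n + k - 1 ∧
    edgeConnectivity (DCell n k) = n + k - 1 := by
  have hdeg := DCell.ncard_neighborSet (n := n) (by omega) k
  have hnt : Nontrivial (DCellVtx n k) := by
    rw [← Finite.one_lt_card_iff_nontrivial, DCell.card_vtx]
    have := DCell.add_le_dcellT hn k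
    omega
  obtain ⟨v⟩ := hnt.to_nonempty
  refine ⟨hdeg, le_antisymm ?_ ?_, le_antisymm ?_ ?_⟩
  · exact hdeg v ▸ vertexConnectivity_le_ncard_neighborSet _ v
  · exact (DCell.nconnected hn k).le_vertexConnectivity
  · exact hdeg v ▸ edgeConnectivity_le_ncard_neighborSet _ v
  · exact le_edgeConnectivity fun F hF => DCell.connected_deleteEdges hn k hF
end

section
/- Let G be a graph, S = {x,y,z} ⊆ V(G), and 𝒯 a set of internally disjoint S-paths each of which has exactly one vertex of S as an internal vertex. If every edge of G joining two vertices of S could be added to extend some path of 𝒯, then under a maximality assumption on |E(𝒯) ∩ E(G[S])|, every edge of the induced subgraph G[{x,y,z}] belongs to E(𝒯). -/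
open SimpleGraph

/-- `v` is an internal vertex of the Steiner path `P`. -/
def SteinerPath.Internal {V : Type*} {G : SimpleGraph V} {S : Set V}
    (P : SteinerPath G S) (v : V) : Prop :=
  v ∈ P.walk.support ∧ v ≠ P.first ∧ v ≠ P.last

/-- The set of edges of the family `P` joining two vertices of `S`. -/
def familySEdges {V : Type*} {G : SimpleGraph V} {S : Set V} {t : ℕ}
    (P : Fin t → SteinerPath G S) : Set (Sym2 V) :=
  {e | (∃ i, e ∈ (P i).walk.edges) ∧ ∀ v ∈ e, v ∈ S}

/-!
Suppose the edge `ab` of `G[{a, b, c}]` lies on no path of the family. If some path has `a` as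
its internal vertex, it runs from `c` through `a` to `b`; replacing it by the edge `ba` followed
by its segment from `a` to `c` keeps the family internally disjoint with one internal vertex per
path, loses no edge of `G[S]` (the discarded segment from `a` to `b` could only carry `ab`) and
gains `ab`, against maximality. The same applies when `b` is internal somewhere. Otherwise every
path is internal at `c`, and since the paths are edge-disjoint and there are at least two, one of
them, `a … c … b`, avoids `cb`; the same replacement, now discarding the segment from `c` to `b`,
again gains `ab`.
-/

namespace SimpleGraph.Walk

variable {V : Type*} {G : SimpleGraph V} {u v w : V}

lemma IsPath.eq_of_mem_support_takeUntil_of_mem_support_dropUntil [DecidableEq V]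
    {p : G.Walk u v} (hp : p.IsPath) (hw : w ∈ p.support) {x : V}
    (hxt : x ∈ (p.takeUntil w hw).support) (hxd : x ∈ (p.dropUntil w hw).support) : x = w := by
  have hnd := hp.support_nodup
  rw [← p.take_spec hw, support_append] at hnd
  rw [← cons_tail_support, List.mem_cons] at hxd
  exact hxd.resolve_right (List.disjoint_of_nodup_append hnd hxt)

lemma IsPath.mem_edges_takeUntil_or_eq [DecidableEq V] {p : G.Walk u v} (hp : p.IsPath)
    (hw : w ∈ p.support) (huw : u ≠ w) {e : Sym2 V} (he : e ∈ p.edges)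
    (hev : ∀ x ∈ e, x = u ∨ x = w ∨ x = v) :
    e ∈ (p.takeUntil w hw).edges ∨ e = s(w, v) := by
  rw [← p.take_spec hw, edges_append, List.mem_append] at he
  refine he.imp_right fun hd => ?_
  have hwv : ∀ x ∈ e, x = w ∨ x = v := by
    intro x hx
    refine (hev x hx).resolve_left ?_
    rintro rfl
    exact huw <| hp.eq_of_mem_support_takeUntil_of_mem_support_dropUntil hw
      (start_mem_support _) (mem_support_of_mem_edges hd hx)
  induction e using Sym2.ind with
  | _ x y =>
    have hxy := (adj_of_mem_edges _ hd).ne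
    rcases hwv x (Sym2.mem_mk_left x y) with rfl | rfl <;>
      rcases hwv y (Sym2.mem_mk_right x y) with rfl | rfl
    all_goals first | exact absurd rfl hxy | rfl | exact Sym2.eq_swap

end SimpleGraph.Walk

section

variable {V : Type*} {G : SimpleGraph V} {S : Set V}

lemma SteinerPath.eq_first_or_eq_last (P : SteinerPath G S) {s : V} (hs : s ∈ S)
    (h : ¬ P.Internal s) : s = P.first ∨ s = P.last := by
  by_contra! hne
  exact h ⟨P.contains s hs, hne⟩

lemma SteinerPath.exists_walk_of_not_internal (P : SteinerPath G S) {u v : V}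
    (hu : u ∈ S) (hv : v ∈ S) (huv : u ≠ v) (hu' : ¬ P.Internal u) (hv' : ¬ P.Internal v) :
    ∃ p : G.Walk u v, p.IsPath ∧ (∀ x, x ∈ p.support ↔ x ∈ P.walk.support) ∧
      ∀ e, e ∈ p.edges ↔ e ∈ P.walk.edges := by
  rcases P.eq_first_or_eq_last hu hu' with hf | hl <;>
    rcases P.eq_first_or_eq_last hv hv' with hf' | hl'
  · exact absurd (hf.trans hf'.symm) huv
  · exact ⟨P.walk.copy hf.symm hl'.symm, (Walk.isPath_copy _ _ _).2 P.isPath, by simp, by simp⟩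
  · exact ⟨(P.walk.copy hf'.symm hl.symm).reverse, ((Walk.isPath_copy _ _ _).2 P.isPath).reverse,
      by simp, by simp⟩
  · exact absurd (hl.trans hl'.symm) huv

def UniqueInternal {t : ℕ} (P : Fin t → SteinerPath G S) : Prop :=
  ∀ i, ∃! s, s ∈ S ∧ (P i).Internal s

variable {t : ℕ} {P : Fin t → SteinerPath G S} {k : Fin t} {R : SteinerPath G S}

lemma UniqueInternal.update (hP : UniqueInternal P) (hR : ∃! s, s ∈ S ∧ R.Internal s) :
    UniqueInternal (Function.update P k R) := by
  intro i
  rcases eq_or_ne i k with rfl | hi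
  · rwa [Function.update_self]
  · rw [Function.update_of_ne hi]
    exact hP i

lemma IDFamily.update (hP : IDFamily G S P)
    (hsupp : ∀ v ∈ R.walk.support, v ∈ (P k).walk.support ∨ v ∈ S)
    (hedges : ∀ e ∈ R.walk.edges, e ∈ (P k).walk.edges ∨ ∀ i, e ∉ (P i).walk.edges) :
    IDFamily G S (Function.update P k R) := by
  have key : ∀ j ≠ k, {v | v ∈ R.walk.support} ∩ {v | v ∈ (P j).walk.support} = S ∧
      ∀ e ∈ R.walk.edges, e ∉ (P j).walk.edges := by
    intro j hj
    refine ⟨Set.Subset.antisymm ?_ fun v hv => ⟨R.contains v hv, (P j).contains v hv⟩, ?_⟩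
    · rintro v ⟨hvR, hvj⟩
      exact (hsupp v hvR).elim (fun hvk => (hP k j hj.symm).1 ▸ ⟨hvk, hvj⟩) id
    · intro e he
      exact (hedges e he).elim (fun hek => (hP k j hj.symm).2 e hek) (· j)
  intro i j hij
  by_cases hi : i = k <;> by_cases hj : j = k
  · exact absurd (hi.trans hj.symm) hij
  · rw [hi, Function.update_self, Function.update_of_ne hj]
    exact key j hj
  · rw [hj, Function.update_self, Function.update_of_ne hi, Set.inter_comm]
    exact ⟨(key i hi).1, fun e hei heR => (key i hi).2 e heR hei⟩
  · rw [Function.update_of_ne hi, Function.update_of_ne hj]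
    exact hP i j hij

lemma familySEdges_finite (hS : S.Finite) (P : Fin t → SteinerPath G S) :
    (familySEdges P).Finite := by
  refine (hS.image2 (fun x y => s(x, y)) hS).subset ?_
  rintro e ⟨-, heS⟩
  induction e using Sym2.ind with
  | _ x y => exact ⟨x, heS x (Sym2.mem_mk_left x y), y, heS y (Sym2.mem_mk_right x y), rfl⟩

lemma familySEdges_subset_update
    (h : ∀ e ∈ (P k).walk.edges, (∀ v ∈ e, v ∈ S) → e ∈ R.walk.edges) :
    familySEdges P ⊆ familySEdges (Function.update P k R) := by
  rintro e ⟨⟨i, hei⟩, heS⟩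
  refine ⟨?_, heS⟩
  rcases eq_or_ne i k with rfl | hi
  · exact ⟨i, by rw [Function.update_self]; exact h e hei heS⟩
  · exact ⟨i, by rwa [Function.update_of_ne hi]⟩

end

section Triple

variable {V : Type*} {G : SimpleGraph V} {S : Set V} {t : ℕ} {P : Fin t → SteinerPath G S}
  {a b c : V}

lemma exists_ncard_familySEdges_lt_of_walk (hab : a ≠ b) (hac : a ≠ c) (hS : S = {a, b, c})
    (hP : IDFamily G S P) (hone : UniqueInternal P) (hadj : G.Adj a b)
    (hnab : ∀ i, s(a, b) ∉ (P i).walk.edges) (k : Fin t) {q : G.Walk a c} (hq : q.IsPath)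
    (hbq : b ∉ q.support) (hsupp : ∀ v ∈ q.support, v ∈ (P k).walk.support)
    (hedges : ∀ e ∈ q.edges, e ∈ (P k).walk.edges)
    (hkeep : ∀ e ∈ (P k).walk.edges, (∀ v ∈ e, v ∈ S) → e ∈ q.edges) :
    ∃ Q : Fin t → SteinerPath G S, IDFamily G S Q ∧ UniqueInternal Q ∧
      (familySEdges P).ncard < (familySEdges Q).ncard := by
  subst hS
  let R : SteinerPath G {a, b, c} :=
    ⟨b, c, .cons hadj.symm q, hq.cons hbq, by
      rintro s (rfl | rfl | rfl) <;> simp⟩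
  have hR : ∃! s, s ∈ ({a, b, c} : Set V) ∧ R.Internal s := by
    refine ⟨a, ⟨by simp, by simp [R], hab, hac⟩, ?_⟩
    rintro s ⟨hs, -, hsb, hsc⟩
    rcases hs with rfl | rfl | rfl
    exacts [rfl, absurd rfl hsb, absurd rfl hsc]
  refine ⟨Function.update P k R, hP.update ?_ ?_, hone.update hR, ?_⟩
  · intro v hv
    simp only [R, Walk.support_cons, List.mem_cons] at hv
    rcases hv with rfl | hv
    exacts [Or.inr (by simp), Or.inl (hsupp v hv)]
  · intro e he
    simp only [R, Walk.edges_cons, List.mem_cons] at he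
    rcases he with rfl | he
    exacts [Or.inr (by simpa [Sym2.eq_swap] using hnab), Or.inl (hedges e he)]
  · refine Set.ncard_lt_ncard ?_ (familySEdges_finite (Set.toFinite _) _)
    refine (Set.ssubset_iff_of_subset (familySEdges_subset_update ?_)).2
      ⟨s(a, b), ⟨⟨k, ?_⟩, ?_⟩, fun h => hnab _ h.1.choose_spec⟩
    · exact fun e he heS => List.mem_cons_of_mem _ (hkeep e he heS)
    · rw [Function.update_self]
      simp [R, Sym2.eq_swap]
    · simp

lemma exists_ncard_familySEdges_lt_of_internal (hab : a ≠ b) (hac : a ≠ c) (hbc : b ≠ c)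
    (hS : S = {a, b, c}) (hP : IDFamily G S P) (hone : UniqueInternal P) (hadj : G.Adj a b)
    (hnab : ∀ i, s(a, b) ∉ (P i).walk.edges) (k : Fin t)
    (hk : (P k).Internal a ∨ ((P k).Internal c ∧ s(c, b) ∉ (P k).walk.edges)) :
    ∃ Q : Fin t → SteinerPath G S, IDFamily G S Q ∧ UniqueInternal Q ∧
      (familySEdges P).ncard < (familySEdges Q).ncard := by
  classical
  have haS : a ∈ S := by simp [hS]
  have hbS : b ∈ S := by simp [hS]
  have hcS : c ∈ S := by simp [hS]
  have hS' : ∀ x ∈ S, x = a ∨ x = b ∨ x = c := by simp [hS]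
  have hnot {w x : V} (hw : w ∈ S) (hx : x ∈ S) (hwx : w ≠ x) (hint : (P k).Internal w) :
      ¬ (P k).Internal x := fun hx' => hwx ((hone k).unique ⟨hw, hint⟩ ⟨hx, hx'⟩)
  rcases hk with ha | ⟨hc, hcb⟩
  · obtain ⟨p, hp, hps, hpe⟩ := (P k).exists_walk_of_not_internal hcS hbS hbc.symm
      (hnot haS hcS hac ha) (hnot haS hbS hab ha)
    have ha' : a ∈ p.support := (hps a).2 ((P k).contains a haS)
    refine exists_ncard_familySEdges_lt_of_walk hab hac hS hP hone hadj hnab k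
      (hp.takeUntil ha').reverse ?_ ?_ ?_ ?_
    · simpa using Walk.endpoint_notMem_support_takeUntil hp ha' hab.symm
    · simpa using fun v hv => (hps v).1 (p.support_takeUntil_subset_support ha' hv)
    · simpa using fun e he => (hpe e).1 (p.edges_takeUntil_subset_edges ha' he)
    · intro e he heS
      rcases hp.mem_edges_takeUntil_or_eq ha' hac.symm ((hpe e).2 he)
        (fun x hx => by rcases hS' x (heS x hx) with h | h | h <;> simp [h]) with h | rfl
      exacts [by simpa using h, absurd he (hnab k)]
  · obtain ⟨p, hp, hps, hpe⟩ := (P k).exists_walk_of_not_internal haS hbS hab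
      (hnot hcS haS hac.symm hc) (hnot hcS hbS hbc.symm hc)
    have hc' : c ∈ p.support := (hps c).2 ((P k).contains c hcS)
    refine exists_ncard_familySEdges_lt_of_walk hab hac hS hP hone hadj hnab k
      (hp.takeUntil hc') ?_ ?_ ?_ ?_
    · exact Walk.endpoint_notMem_support_takeUntil hp hc' hbc
    · exact fun v hv => (hps v).1 (p.support_takeUntil_subset_support hc' hv)
    · exact fun e he => (hpe e).1 (p.edges_takeUntil_subset_edges hc' he)
    · intro e he heS
      rcases hp.mem_edges_takeUntil_or_eq hc' hac ((hpe e).2 he)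
        (fun x hx => by rcases hS' x (heS x hx) with h | h | h <;> simp [h]) with h | rfl
      exacts [h, absurd he hcb]

lemma exists_mem_edges_of_adj (hab : a ≠ b) (hac : a ≠ c) (hbc : b ≠ c) (hS : S = {a, b, c})
    (ht : 2 ≤ t) (hP : IDFamily G S P) (hone : UniqueInternal P)
    (hmax : ∀ Q : Fin t → SteinerPath G S, IDFamily G S Q → UniqueInternal Q →
      (familySEdges Q).ncard ≤ (familySEdges P).ncard)
    (hadj : G.Adj a b) : ∃ i, s(a, b) ∈ (P i).walk.edges := by
  by_contra! hnab
  obtain ⟨Q, hQ, hQone, hlt⟩ : ∃ Q : Fin t → SteinerPath G S, IDFamily G S Q ∧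
      UniqueInternal Q ∧ (familySEdges P).ncard < (familySEdges Q).ncard := by
    by_cases ha : ∃ k, (P k).Internal a
    · obtain ⟨k, hk⟩ := ha
      exact exists_ncard_familySEdges_lt_of_internal hab hac hbc hS hP hone hadj hnab k (.inl hk)
    by_cases hb : ∃ k, (P k).Internal b
    · obtain ⟨k, hk⟩ := hb
      refine exists_ncard_familySEdges_lt_of_internal hab.symm hbc hac
        (hS.trans (Set.insert_comm _ _ _)) hP hone hadj.symm (by simpa [Sym2.eq_swap] using hnab)
        k (.inl hk)
    push Not at ha hb
    -- every path now has `c` as its internal vertex, and the first two paths, being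
    -- edge-disjoint, cannot both contain `cb`
    have hc : ∀ k, (P k).Internal c := by
      intro k
      obtain ⟨s, ⟨hs, hint⟩, -⟩ := hone k
      rw [hS] at hs
      rcases hs with rfl | rfl | rfl
      exacts [absurd hint (ha k), absurd hint (hb k), hint]
    obtain ⟨k, hk⟩ : ∃ k, s(c, b) ∉ (P k).walk.edges := by
      by_contra! h
      exact (hP ⟨0, by omega⟩ ⟨1, by omega⟩ (by simp)).2 _ (h _) (h _)
    exact exists_ncard_familySEdges_lt_of_internal hab hac hbc hS hP hone hadj hnab k
      (.inr ⟨hc k, hk⟩)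
  exact (hmax Q hQ hQone).not_gt hlt

end Triple

lemma exists_eq_insert_insert_singleton {V : Type*} {x y z a b : V} (hxy : x ≠ y) (hxz : x ≠ z)
    (hyz : y ≠ z) (ha : a ∈ ({x, y, z} : Set V)) (hb : b ∈ ({x, y, z} : Set V)) (hab : a ≠ b) :
    ∃ c, a ≠ c ∧ b ≠ c ∧ ({x, y, z} : Set V) = {a, b, c} := by
  simp only [Set.mem_insert_iff, Set.mem_singleton_iff] at ha hb
  rcases ha with rfl | rfl | rfl <;> rcases hb with rfl | rfl | rfl
  all_goals first
    | exact absurd rfl hab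
    | exact ⟨x, by grind, by grind, by grind⟩
    | exact ⟨y, by grind, by grind, by grind⟩
    | exact ⟨z, by grind, by grind, by grind⟩

/-- Claim 1: for a family `𝒯` of internally disjoint `{x,y,z}`-paths, each with exactly
one vertex of `{x,y,z}` internal, maximizing `|E(𝒯) ∩ E(G[{x,y,z}])|`, every edge of
the induced subgraph `G[{x,y,z}]` belongs to `E(𝒯)`. -/
theorem stmt19 {V : Type*} (G : SimpleGraph V)
    (x y z : V) (hxy : x ≠ y) (hxz : x ≠ z) (hyz : y ≠ z)
    (t : ℕ) (ht : 2 ≤ t)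
    (P : Fin t → SteinerPath G {x, y, z})
    (hP : IDFamily G {x, y, z} P)
    (hone : ∀ i, ∃! s, s ∈ ({x, y, z} : Set V) ∧ (P i).Internal s)
    (hmax : ∀ Q : Fin t → SteinerPath G {x, y, z},
      IDFamily G {x, y, z} Q →
      (∀ i, ∃! s, s ∈ ({x, y, z} : Set V) ∧ (Q i).Internal s) →
      (familySEdges Q).ncard ≤ (familySEdges P).ncard) :
    ∀ a b : V, G.Adj a b → a ∈ ({x, y, z} : Set V) → b ∈ ({x, y, z} : Set V) →
      ∃ i, s(a, b) ∈ (P i).walk.edges := by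
  intro a b hadj ha hb
  obtain ⟨c, hac, hbc, hS⟩ := exists_eq_insert_insert_singleton hxy hxz hyz ha hb hadj.ne
  exact exists_mem_edges_of_adj hadj.ne hac hbc hS ht hP hone hmax hadj
end
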